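/- Let vᵢ, hᵢ, aᵢ ∈ R^d for i = 1,…,n with v = (1/n)∑ᵢvᵢ, let U₁,…,Uₙ be independent uniform random size-τm subsets of blocks, and define gᵗ = (1/n)∑ᵢ[hᵢ + (1/τ)(aᵢ − hᵢ)_{Uᵢ}]. Then E‖gᵗ − v‖² ≤ (2/n²)∑ᵢ[(1/τ + n − 1)‖aᵢ − vᵢ‖² + (1/τ − 1)‖hᵢ − vᵢ‖²]. -/

import Mathlib

/-!
Write `gᵗ - v = n⁻¹ ∑ᵢ Xᵢ(Uᵢ)` with `Xᵢ(A) = (hᵢ - vᵢ) + τ⁻¹ (aᵢ - hᵢ)_A`. Because the `Uᵢ` are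
independent, the cross terms of `E‖∑ᵢ Xᵢ(Uᵢ)‖²` factor, so it equals `‖∑ᵢ E Xᵢ‖² + ∑ᵢ Var Xᵢ`.
A fixed block lies in a uniform `τm`-subset with probability `τ`, whence `E x_U = τ x` and
`E ‖x_U‖² = τ ‖x‖²`; therefore `E Xᵢ = aᵢ - vᵢ` and `Var Xᵢ = (1/τ - 1) ‖aᵢ - hᵢ‖²`. The bound
follows from `‖∑ᵢ yᵢ‖² ≤ n ∑ᵢ ‖yᵢ‖²` and `‖aᵢ - hᵢ‖² ≤ 2 ‖aᵢ - vᵢ‖² + 2 ‖hᵢ - vᵢ‖²`.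
-/

open Finset

/-- `x_U`: keep the coordinates of `x` lying in blocks of `U`, zero the rest. -/
noncomputable def restr {d m : ℕ} (b : Fin d → Fin m) (U : Finset (Fin m))
    (x : EuclideanSpace ℝ (Fin d)) : EuclideanSpace ℝ (Fin d) :=
  (WithLp.equiv 2 (Fin d → ℝ)).symm (fun j => if b j ∈ U then x j else 0)

namespace Fintype

variable {ι κ α : Type*} [Fintype ι] [DecidableEq ι] [AddCommMonoid α]

lemma sum_piFinset_apply₂ [DecidableEq κ] (f : κ → κ → α) (s : Finset κ) {i j : ι}
    (hij : i ≠ j) :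
    ∑ g ∈ piFinset fun _ : ι ↦ s, f (g i) (g j)
      = #s ^ (card ι - 2) • ∑ a ∈ s, ∑ b ∈ s, f a b := by
  rw [← sum_fiberwise_of_maps_to (g := fun g ↦ g i) (t := s)
    (fun g hg ↦ mem_piFinset.1 hg i), smul_sum]
  refine Finset.sum_congr rfl fun a ha ↦ ?_
  rw [← piFinset_update_singleton_eq_filter_piFinset_eq (fun _ ↦ s) i ha]
  have hfix : ∀ g ∈ piFinset (Function.update (fun _ : ι ↦ s) i {a}), g i = a :=
    fun g hg ↦ by simpa using mem_piFinset.1 hg i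
  rw [Finset.sum_congr rfl fun g hg ↦ by rw [hfix g hg]]
  rw [← sum_fiberwise_of_maps_to (g := fun g ↦ g j) (t := s)
    (fun g hg ↦ by simpa [hij.symm] using mem_piFinset.1 hg j), smul_sum]
  refine Finset.sum_congr rfl fun b hb ↦ ?_
  rw [Finset.sum_congr rfl fun g hg ↦ by rw [(mem_filter.1 hg).2], sum_const,
    card_filter_piFinset_eq_of_mem (Function.update (fun _ ↦ s) i {a}) j
      (by simpa [hij.symm] using hb),
    Finset.prod_congr rfl fun l _ ↦
      Function.apply_update (fun _ ↦ Finset.card) (fun _ ↦ s) i {a} l,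
    prod_update_of_mem (mem_erase.2 ⟨hij, mem_univ i⟩), prod_const, card_singleton, one_mul,
    card_sdiff_of_subset (by simpa using hij), card_erase_of_mem (mem_univ j), card_univ,
    card_singleton, Nat.sub_sub]

end Fintype

section IndependentSum

open Fintype

variable {ι κ E : Type*} [Fintype ι] [NormedAddCommGroup E] [InnerProductSpace ℝ E]

lemma norm_sq_sum_eq_sum_sum_inner (x : ι → E) :
    ‖∑ i, x i‖ ^ 2 = ∑ i, ∑ j, inner ℝ (x i) (x j) := by
  rw [← real_inner_self_eq_norm_sq, sum_inner]
  simp only [inner_sum]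

theorem inv_card_pow_mul_sum_piFinset_norm_sq_sum [DecidableEq ι] [DecidableEq κ]
    {s : Finset κ} (hs : s.Nonempty) (X : ι → κ → E) :
    (#s : ℝ)⁻¹ ^ card ι * ∑ U ∈ piFinset fun _ : ι ↦ s, ‖∑ i, X i (U i)‖ ^ 2
      = ‖∑ i, (#s : ℝ)⁻¹ • ∑ A ∈ s, X i A‖ ^ 2
        + ∑ i, ((#s : ℝ)⁻¹ * ∑ A ∈ s, ‖X i A‖ ^ 2 - ‖(#s : ℝ)⁻¹ • ∑ A ∈ s, X i A‖ ^ 2) := by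
  set N : ℝ := (#s : ℝ)
  have hN : N ≠ 0 := by positivity
  have hpair : ∀ i j,
      N⁻¹ ^ card ι * ∑ U ∈ piFinset fun _ : ι ↦ s, inner ℝ (X i (U i)) (X j (U j))
        = inner ℝ (N⁻¹ • ∑ A ∈ s, X i A) (N⁻¹ • ∑ A ∈ s, X j A)
          + if i = j then N⁻¹ * ∑ A ∈ s, ‖X i A‖ ^ 2 - ‖N⁻¹ • ∑ A ∈ s, X i A‖ ^ 2 else 0 := by
    intro i j
    rcases eq_or_ne i j with rfl | hij
    · have hcard : 1 ≤ card ι := Fintype.card_pos_iff.2 ⟨i⟩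
      rw [sum_piFinset_apply (fun A ↦ inner ℝ (X i A) (X i A)), if_pos rfl,
        real_inner_self_eq_norm_sq, nsmul_eq_mul, Nat.cast_pow, inv_pow, pow_sub₀ _ hN hcard]
      simp only [real_inner_self_eq_norm_sq]
      field_simp
      ring
    · have hcard : 2 ≤ card ι := Fintype.one_lt_card_iff.2 ⟨i, j, hij⟩
      rw [sum_piFinset_apply₂ (fun A B ↦ inner ℝ (X i A) (X j B)) s hij, if_neg hij, add_zero,
        nsmul_eq_mul, Nat.cast_pow, inv_pow, pow_sub₀ _ hN hcard, real_inner_smul_left,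
        real_inner_smul_right, sum_inner]
      simp only [inner_sum]
      field_simp
  have hswap : ∑ U ∈ piFinset (fun _ : ι ↦ s), ‖∑ i, X i (U i)‖ ^ 2
      = ∑ i, ∑ j, ∑ U ∈ piFinset fun _ : ι ↦ s, inner ℝ (X i (U i)) (X j (U j)) := by
    simp only [norm_sq_sum_eq_sum_sum_inner]
    rw [sum_comm]
    exact Finset.sum_congr rfl fun i _ ↦ sum_comm
  rw [hswap]
  simp only [mul_sum (s := (univ : Finset ι))]
  simp only [hpair, sum_add_distrib, Fintype.sum_ite_eq, norm_sq_sum_eq_sum_sum_inner]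

end IndependentSum

lemma Nat.cast_choose_pred_pred {K : Type*} [Field K] [CharZero K] {m k : ℕ} (hk : 0 < k)
    (hm : 0 < m) : (((m - 1).choose (k - 1) : ℕ) : K) = k / m * m.choose k := by
  obtain ⟨m, rfl⟩ := Nat.exists_eq_add_of_lt hm
  obtain ⟨k, rfl⟩ := Nat.exists_eq_add_of_lt hk
  simp only [zero_add, Nat.add_sub_cancel]
  rw [div_mul_eq_mul_div, eq_div_iff (Nat.cast_ne_zero.2 m.succ_ne_zero), mul_comm]
  exact_mod_cast (Nat.add_one_mul_choose_eq m k).trans (mul_comm _ _)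

lemma card_filter_mem_powersetCard_univ {α : Type*} [Fintype α] [DecidableEq α] {k : ℕ}
    (hk : 0 < k) (e : α) :
    #{A ∈ powersetCard k (univ : Finset α) | e ∈ A} = (Fintype.card α - 1).choose (k - 1) := by
  simpa using card_filter_powersetCard_subset {e} univ k (subset_univ _) hk

section BlockSampling

variable {d m k : ℕ} (b : Fin d → Fin m)

lemma restr_apply (U : Finset (Fin m)) (x : EuclideanSpace ℝ (Fin d)) (j : Fin d) :
    restr b U x j = if b j ∈ U then x j else 0 := rfl

lemma inv_choose_mul_sum_ite_mem (hk : 0 < k) (hkm : k ≤ m) (e : Fin m) (c : ℝ) :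
    (m.choose k : ℝ)⁻¹ * ∑ A ∈ powersetCard k univ, (if e ∈ A then c else 0) = k / m * c := by
  rw [← sum_filter, sum_const, card_filter_mem_powersetCard_univ hk, nsmul_eq_mul,
    Fintype.card_fin, Nat.cast_choose_pred_pred hk (hk.trans_le hkm)]
  have : (m.choose k : ℝ) ≠ 0 := by exact_mod_cast (Nat.choose_pos hkm).ne'
  field_simp

lemma inv_choose_smul_sum_restr (hk : 0 < k) (hkm : k ≤ m) (x : EuclideanSpace ℝ (Fin d)) :
    (m.choose k : ℝ)⁻¹ • ∑ A ∈ powersetCard k univ, restr b A x = (k / m : ℝ) • x := by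
  ext j
  simp only [PiLp.smul_apply, WithLp.ofLp_sum, Finset.sum_apply, smul_eq_mul]
  exact inv_choose_mul_sum_ite_mem hk hkm _ _

lemma inv_choose_mul_sum_norm_sq_restr (hk : 0 < k) (hkm : k ≤ m)
    (x : EuclideanSpace ℝ (Fin d)) :
    (m.choose k : ℝ)⁻¹ * ∑ A ∈ powersetCard k univ, ‖restr b A x‖ ^ 2 = k / m * ‖x‖ ^ 2 := by
  simp only [EuclideanSpace.norm_sq_eq, restr_apply, apply_ite (‖·‖ ^ 2), norm_zero]
  rw [sum_comm, mul_sum, mul_sum]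
  exact Finset.sum_congr rfl fun j _ ↦ by simpa using inv_choose_mul_sum_ite_mem hk hkm (b j) _

lemma inv_choose_smul_sum_estimator (hk : 0 < k) (hkm : k ≤ m)
    (c w : EuclideanSpace ℝ (Fin d)) :
    (m.choose k : ℝ)⁻¹ • ∑ A ∈ powersetCard k univ, (c + (k / m : ℝ)⁻¹ • restr b A w)
      = c + w := by
  have hτ : (k / m : ℝ) ≠ 0 := by have := hk.trans_le hkm; positivity
  have hN : (m.choose k : ℝ) ≠ 0 := by exact_mod_cast (Nat.choose_pos hkm).ne'
  rw [sum_add_distrib, smul_add, sum_const, card_powersetCard, card_univ, Fintype.card_fin,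
    ← Nat.cast_smul_eq_nsmul ℝ, smul_smul, inv_mul_cancel₀ hN, one_smul, ← smul_sum, smul_comm,
    inv_choose_smul_sum_restr b hk hkm, smul_smul, inv_mul_cancel₀ hτ, one_smul]

lemma inv_choose_mul_sum_norm_sq_estimator (hk : 0 < k) (hkm : k ≤ m)
    (c w : EuclideanSpace ℝ (Fin d)) :
    (m.choose k : ℝ)⁻¹ * ∑ A ∈ powersetCard k univ, ‖c + (k / m : ℝ)⁻¹ • restr b A w‖ ^ 2
      = ‖c + w‖ ^ 2 + ((k / m : ℝ)⁻¹ - 1) * ‖w‖ ^ 2 := by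
  set t : ℝ := (k / m : ℝ)⁻¹
  have ht : t * (k / m) = 1 := inv_mul_cancel₀ (by have := hk.trans_le hkm; positivity)
  have hN : (m.choose k : ℝ)⁻¹ * m.choose k = 1 :=
    inv_mul_cancel₀ (by exact_mod_cast (Nat.choose_pos hkm).ne')
  have hinner : (m.choose k : ℝ)⁻¹ * ∑ A ∈ powersetCard k univ, inner ℝ c (restr b A w)
      = k / m * inner ℝ c w := by
    rw [← inner_sum, ← real_inner_smul_right, inv_choose_smul_sum_restr b hk hkm,
      real_inner_smul_right]
  have hnorm := inv_choose_mul_sum_norm_sq_restr b hk hkm w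
  simp only [norm_add_sq_real, real_inner_smul_right, norm_smul, mul_pow, Real.norm_eq_abs,
    sq_abs, sum_add_distrib, sum_const, card_powersetCard, card_univ, Fintype.card_fin,
    nsmul_eq_mul, ← mul_sum, mul_add] at hinner hnorm ⊢
  linear_combination (2 * t) * hinner + t ^ 2 * hnorm + ‖c‖ ^ 2 * hN
    + (2 * inner ℝ c w + t * ‖w‖ ^ 2) * ht

end BlockSampling

section Estimates

variable {ι E : Type*} [Fintype ι] [SeminormedAddCommGroup E]

lemma norm_sq_sum_le_card_mul_sum_norm_sq (x : ι → E) :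
    ‖∑ i, x i‖ ^ 2 ≤ Fintype.card ι * ∑ i, ‖x i‖ ^ 2 := by
  calc ‖∑ i, x i‖ ^ 2 ≤ (∑ i, ‖x i‖) ^ 2 := by gcongr; exact norm_sum_le _ _
    _ ≤ _ := by simpa using sq_sum_le_card_mul_sum_sq (s := univ) (f := fun i ↦ ‖x i‖)

lemma norm_sub_sq_le (x y : E) : ‖x - y‖ ^ 2 ≤ 2 * ‖x‖ ^ 2 + 2 * ‖y‖ ^ 2 := by
  nlinarith [norm_sub_le x y, norm_nonneg (x - y), sq_nonneg (‖x‖ - ‖y‖)]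

lemma norm_sq_sum_add_sum_mul_norm_sub_sq_le {s : ℝ} (hs : 1 ≤ s) (x y : ι → E) :
    ‖∑ i, x i‖ ^ 2 + ∑ i, (s - 1) * ‖x i - y i‖ ^ 2
      ≤ 2 * ∑ i, ((s + Fintype.card ι - 1) * ‖x i‖ ^ 2 + (s - 1) * ‖y i‖ ^ 2) := by
  calc ‖∑ i, x i‖ ^ 2 + ∑ i, (s - 1) * ‖x i - y i‖ ^ 2
      ≤ Fintype.card ι * ∑ i, ‖x i‖ ^ 2
          + ∑ i, (s - 1) * (2 * ‖x i‖ ^ 2 + 2 * ‖y i‖ ^ 2) := by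
        gcongr with i
        · exact norm_sq_sum_le_card_mul_sum_norm_sq x
        · exact norm_sub_sq_le _ _
    _ ≤ _ := by
        rw [mul_sum, mul_sum, ← sum_add_distrib]
        gcongr with i
        nlinarith [mul_nonneg (Nat.cast_nonneg (Fintype.card ι) : (0 : ℝ) ≤ _) (sq_nonneg ‖x i‖)]

end Estimates

theorem stmt10_general {d m n : ℕ} (b : Fin d → Fin m)
    (k : ℕ) (hk : 0 < k) (hkm : k ≤ m) (τ : ℝ) (hτ : τ = (k : ℝ) / m)
    (v h a : Fin n → EuclideanSpace ℝ (Fin d))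
    (vbar : EuclideanSpace ℝ (Fin d)) (hvbar : vbar = (n : ℝ)⁻¹ • ∑ i, v i) :
    ((m.choose k : ℝ))⁻¹ ^ n *
      ∑ U ∈ Fintype.piFinset
          (fun _ : Fin n => Finset.powersetCard k (Finset.univ : Finset (Fin m))),
        ‖(n : ℝ)⁻¹ • ∑ i, (h i + τ⁻¹ • restr b (U i) (a i - h i)) - vbar‖ ^ 2
      ≤ 2 / (n : ℝ) ^ 2 *
          ∑ i, ((τ⁻¹ + n - 1) * ‖a i - v i‖ ^ 2 + (τ⁻¹ - 1) * ‖h i - v i‖ ^ 2) := by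
  subst hτ hvbar
  have hm : 0 < m := hk.trans_le hkm
  have hτ_inv : 1 ≤ (k / m : ℝ)⁻¹ :=
    (one_le_inv₀ (by positivity)).2 (div_le_one_of_le₀ (by exact_mod_cast hkm) (by positivity))
  set S := powersetCard k (univ : Finset (Fin m))
  have hS : #S = m.choose k := by simp [S]
  set X : Fin n → Finset (Fin m) → EuclideanSpace ℝ (Fin d) :=
    fun i A ↦ (h i - v i) + (k / m : ℝ)⁻¹ • restr b A (a i - h i)
  have herr : ∀ U : Fin n → Finset (Fin m),
      (n : ℝ)⁻¹ • ∑ i, (h i + (k / m : ℝ)⁻¹ • restr b (U i) (a i - h i))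
          - (n : ℝ)⁻¹ • ∑ i, v i = (n : ℝ)⁻¹ • ∑ i, X i (U i) := fun U ↦ by
    simp only [← smul_sub, ← sum_sub_distrib, X, add_sub_right_comm]
  have hmean : ∀ i, (#S : ℝ)⁻¹ • ∑ A ∈ S, X i A = a i - v i := fun i ↦ by
    rw [hS, inv_choose_smul_sum_estimator b hk hkm, sub_add_sub_cancel']
  have hvar : ∀ i, (#S : ℝ)⁻¹ * ∑ A ∈ S, ‖X i A‖ ^ 2 - ‖(#S : ℝ)⁻¹ • ∑ A ∈ S, X i A‖ ^ 2
      = ((k / m : ℝ)⁻¹ - 1) * ‖a i - h i‖ ^ 2 := fun i ↦ by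
    rw [hmean, hS, inv_choose_mul_sum_norm_sq_estimator b hk hkm, sub_add_sub_cancel',
      add_sub_cancel_left]
  calc _ = (n : ℝ)⁻¹ ^ 2 * ((#S : ℝ)⁻¹ ^ Fintype.card (Fin n)
          * ∑ U ∈ Fintype.piFinset fun _ ↦ S, ‖∑ i, X i (U i)‖ ^ 2) := by
        simp only [herr, norm_smul, mul_pow, norm_inv, RCLike.norm_natCast, ← mul_sum, hS,
          Fintype.card_fin]
        ring
    _ = (n : ℝ)⁻¹ ^ 2 * (‖∑ i, (a i - v i)‖ ^ 2
          + ∑ i, ((k / m : ℝ)⁻¹ - 1) * ‖a i - h i‖ ^ 2) := by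
        rw [inv_card_pow_mul_sum_piFinset_norm_sq_sum (by simpa [S] using hkm) X]
        simp only [hvar]
        simp only [hmean]
    _ ≤ (n : ℝ)⁻¹ ^ 2 * (2 * ∑ i, (((k / m : ℝ)⁻¹ + n - 1) * ‖a i - v i‖ ^ 2
          + ((k / m : ℝ)⁻¹ - 1) * ‖h i - v i‖ ^ 2)) := by
        gcongr
        simpa using norm_sq_sum_add_sum_mul_norm_sub_sq_le hτ_inv (a - v) (h - v)
    _ = _ := by ring

/-- For fixed vectors `vᵢ, hᵢ, aᵢ` with `v = (1/n)∑ᵢvᵢ`, and independent uniform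
size-`τm` block subsets `U₁,…,Uₙ` (encoded by uniform averaging over all tuples),
the estimator `gᵗ = (1/n)∑ᵢ[hᵢ + (1/τ)(aᵢ − hᵢ)_{Uᵢ}]` satisfies
`E‖gᵗ − v‖² ≤ (2/n²)∑ᵢ[(1/τ + n − 1)‖aᵢ − vᵢ‖² + (1/τ − 1)‖hᵢ − vᵢ‖²]`. -/
theorem stmt10 {d m n : ℕ} (hn : 0 < n) (b : Fin d → Fin m)
    (k : ℕ) (hk : 0 < k) (hkm : k ≤ m) (τ : ℝ) (hτ : τ = (k : ℝ) / m)
    (v h a : Fin n → EuclideanSpace ℝ (Fin d))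
    (vbar : EuclideanSpace ℝ (Fin d)) (hvbar : vbar = (n : ℝ)⁻¹ • ∑ i, v i) :
    ((m.choose k : ℝ))⁻¹ ^ n *
      ∑ U ∈ Fintype.piFinset
          (fun _ : Fin n => Finset.powersetCard k (Finset.univ : Finset (Fin m))),
        ‖(n : ℝ)⁻¹ • ∑ i, (h i + τ⁻¹ • restr b (U i) (a i - h i)) - vbar‖ ^ 2
      ≤ 2 / (n : ℝ) ^ 2 *
          ∑ i, ((τ⁻¹ + n - 1) * ‖a i - v i‖ ^ 2 + (τ⁻¹ - 1) * ‖h i - v i‖ ^ 2) :=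
  stmt10_general b k hk hkm τ hτ v h a vbar hvbar
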